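/- Let g be a finite-dimensional real Lie algebra equipped with an inner product ⟨·,·⟩; for u ∈ g let ad_u : g → g denote v ↦ ⁅u,v⁆ and ad*_u its adjoint with respect to ⟨·,·⟩. Let X ∈ g satisfy ad*_X = −ad_X and let Φ(t) := exp(t·ad_X). Suppose x₁ : ℝ → g is differentiable and satisfies x₁'(t) + ad*_{x₁(t)} X = 0 and ad*_{x₁(t)} x₁(t) = 0 for all t. Then U(t) := X + Φ(t)(x₁(t)) satisfies the Euler–Arnold equation U'(t) = −ad*_{U(t)} U(t) for all t ∈ ℝ. -/

import Mathlib

open scoped RealInnerProductSpace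

variable {g : Type*} [NormedAddCommGroup g] [InnerProductSpace ℝ g] [FiniteDimensional ℝ g]

/-- The adjoint operator `ad_u : v ↦ ⁅u, v⁆` of a Lie bracket `br`, as a
continuous linear map on the finite-dimensional space `g`. -/
noncomputable def adOp (br : g →ₗ[ℝ] g →ₗ[ℝ] g) (u : g) : g →L[ℝ] g :=
  LinearMap.toContinuousLinearMap (br u)

/-- The coadjoint operator `ad*_u`, the adjoint of `ad_u` with respect to the
inner product. -/
noncomputable def adStarOp (br : g →ₗ[ℝ] g →ₗ[ℝ] g) (u : g) : g →L[ℝ] g :=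
  ContinuousLinearMap.adjoint (adOp br u)

/-- The operator exponential `Φ(t) = exp(t ad_X)`. -/
noncomputable def phiExp (br : g →ₗ[ℝ] g →ₗ[ℝ] g) (X : g) (t : ℝ) : g →L[ℝ] g :=
  NormedSpace.exp (t • adOp br X)

/-!
`Φ(t) = exp(t ad_X)` fixes `X`, since `ad_X X = 0`; it is a Lie algebra automorphism, since `ad_X`
is a derivation (Jacobi), and it is orthogonal, since `ad_X` is skew-adjoint. Hence it intertwines
the coadjoint action: `ad*_{Φ v} (Φ w) = Φ (ad*_v w)`. Differentiating `U = X + Φ x₁` gives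
`U' = ad_X (Φ x₁) - Φ (ad*_{x₁} X)`, while expanding `-ad*_U U` bilinearly, the term
`ad*_X X = -⁅X, X⁆` vanishes, `ad*_X (Φ x₁) = -ad_X (Φ x₁)`, `ad*_{Φ x₁} X = Φ (ad*_{x₁} X)` and
`ad*_{Φ x₁} (Φ x₁) = Φ (ad*_{x₁} x₁) = 0`.
-/

open NormedSpace ContinuousLinearMap

section Banach

variable {E : Type*} [NormedAddCommGroup E] [NormedSpace ℝ E] [CompleteSpace E]

theorem exp_smul_apply_eq_self_of_apply_eq_zero {D : E →L[ℝ] E} {x : E} (hx : D x = 0)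
    (t : ℝ) : exp (t • D) x = x := by
  have hderiv (s : ℝ) : HasDerivAt (fun s : ℝ => exp (s • D) x) 0 s := by
    simpa [hx] using (hasDerivAt_exp_smul_const D s).clm_apply (hasDerivAt_const s x)
  simpa using is_const_of_deriv_eq_zero (fun s => (hderiv s).differentiableAt)
    (fun s => (hderiv s).deriv) t 0

theorem exp_smul_map_map_of_leibniz (B : E →L[ℝ] E →L[ℝ] E) {D : E →L[ℝ] E}
    (hD : ∀ a b, D (B a b) = B (D a) b + B a (D b)) (t : ℝ) (a b : E) :
    B (exp (t • D) a) (exp (t • D) b) = exp (t • D) (B a b) := by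
  -- `s ↦ exp((t - s) D) B(exp(s D) a, exp(s D) b)` interpolates between the two sides
  set f : ℝ → E := fun s => exp ((t - s) • D) (B (exp (s • D) a) (exp (s • D) b))
  have hderiv (s : ℝ) : HasDerivAt f 0 s := by
    have hflow (x : E) : HasDerivAt (fun s : ℝ => exp (s • D) x) (D (exp (s • D) x)) s := by
      simpa using (hasDerivAt_exp_smul_const' D s).clm_apply (hasDerivAt_const s x)
    have hback : HasDerivAt (fun s : ℝ => exp ((t - s) • D)) (-(exp ((t - s) • D) * D)) s := by
      simpa [Function.comp_def] using
        (hasDerivAt_exp_smul_const D (t - s)).scomp s ((hasDerivAt_id s).const_sub t)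
    convert hback.clm_apply (B.hasDerivAt_of_bilinear (fun _ => hflow a) (fun _ => hflow b))
      using 1
    simp only [neg_apply, mul_apply_eq_comp, hD, map_add]
    abel
  simpa [f] using is_const_of_deriv_eq_zero (fun s => (hderiv s).differentiableAt)
    (fun s => (hderiv s).deriv) t 0

end Banach

section Hilbert

variable {H : Type*} [NormedAddCommGroup H] [InnerProductSpace ℝ H] [CompleteSpace H]

theorem exp_smul_mem_unitary_of_adjoint_eq_neg {A : H →L[ℝ] H} (hA : adjoint A = -A) (t : ℝ) :
    exp (t • A) ∈ unitary (H →L[ℝ] H) :=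
  letI : NormedAlgebra ℚ (H →L[ℝ] H) := NormedAlgebra.restrictScalars ℚ ℝ _
  exp_mem_unitary_of_mem_skewAdjoint (skewAdjoint.smul_mem t (skewAdjoint.mem_iff.mpr hA))

theorem adjoint_apply_map_of_mem_unitary (B : H →L[ℝ] H →L[ℝ] H) {U : H →L[ℝ] H}
    (hU : U ∈ unitary (H →L[ℝ] H)) (hB : ∀ v w, B (U v) (U w) = U (B v w)) (v w : H) :
    adjoint (B (U v)) (U w) = U (adjoint (B v) w) := by
  have hUU (z : H) : U (star U z) = z := congr($(Unitary.mul_star_self_of_mem hU) z)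
  have hUU' (z : H) : star U (U z) = z := congr($(Unitary.star_mul_self_of_mem hU) z)
  have hconj : B (U v) = U * B v * star U := by
    ext z
    rw [mul_apply_eq_comp, mul_apply_eq_comp, ← hB, hUU]
  rw [← star_eq_adjoint, hconj, star_mul, star_mul, star_star]
  rw [mul_apply_eq_comp, mul_apply_eq_comp, hUU', star_eq_adjoint]

end Hilbert

section Bracket

variable {M : Type*} [AddCommGroup M]

theorem LinearMap.apply_self_eq_zero_of_antisymm [Module ℝ M] (br : M →ₗ[ℝ] M →ₗ[ℝ] M)
    (hanti : ∀ x y, br x y = -br y x) (x : M) : br x x = 0 := by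
  linear_combination (norm := module) (1 / 2 : ℝ) • hanti x x

theorem LinearMap.leibniz_of_jacobi {R : Type*} [CommRing R] [Module R M]
    (br : M →ₗ[R] M →ₗ[R] M) (hanti : ∀ x y, br x y = -br y x)
    (hjacobi : ∀ x y z, br (br x y) z + br (br y z) x + br (br z x) y = 0) (x y z : M) :
    br x (br y z) = br (br x y) z + br y (br x z) := by
  have h := hjacobi x y z
  rw [hanti (br y z) x, hanti (br z x) y, hanti z x, map_neg, neg_neg] at h
  linear_combination (norm := abel) -h

end Bracket

noncomputable def adCLM (br : g →ₗ[ℝ] g →ₗ[ℝ] g) : g →L[ℝ] g →L[ℝ] g :=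
  LinearMap.toContinuousLinearMap (LinearMap.toContinuousLinearMap.toLinearMap ∘ₗ br)

theorem adCLM_apply (br : g →ₗ[ℝ] g →ₗ[ℝ] g) (u : g) : adCLM br u = adOp br u := rfl

theorem adStarOp_add (br : g →ₗ[ℝ] g →ₗ[ℝ] g) (u v : g) :
    adStarOp br (u + v) = adStarOp br u + adStarOp br v := by
  simp only [adStarOp, ← adCLM_apply, map_add]

/-- The truncated perturbative hierarchy (system (5.12)) in the
finite-dimensional real Lie algebra setting (the Lie algebra is a
finite-dimensional real inner product space `g` with an antisymmetric bilinear
bracket `br` satisfying the Jacobi identity). If `ad*_X = -ad_X`,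
`x₁' + ad*_{x₁} X = 0` and `ad*_{x₁} x₁ = 0`, then `U(t) = X + Φ(t)(x₁(t))`
solves the Euler–Arnold equation `U' = -ad*_U U`. -/
theorem statement18 (br : g →ₗ[ℝ] g →ₗ[ℝ] g)
    (hanti : ∀ x y : g, br x y = -br y x)
    (hjacobi : ∀ x y z : g, br (br x y) z + br (br y z) x + br (br z x) y = 0)
    (X : g) (hX : adStarOp br X = -adOp br X)
    (x₁ : ℝ → g)
    (h1 : ∀ t : ℝ, HasDerivAt x₁ (-(adStarOp br (x₁ t) X)) t)
    (h2 : ∀ t : ℝ, adStarOp br (x₁ t) (x₁ t) = 0) :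
    ∀ t : ℝ,
      HasDerivAt (fun s : ℝ => X + phiExp br X s (x₁ s))
        (-(adStarOp br (X + phiExp br X t (x₁ t)) (X + phiExp br X t (x₁ t)))) t := by
  intro t
  have hXX : adOp br X X = 0 := br.apply_self_eq_zero_of_antisymm hanti X
  have hΦX : phiExp br X t X = X := exp_smul_apply_eq_self_of_apply_eq_zero hXX t
  have hcov (v w : g) :
      adStarOp br (phiExp br X t v) (phiExp br X t w) = phiExp br X t (adStarOp br v w) :=
    adjoint_apply_map_of_mem_unitary (adCLM br) (exp_smul_mem_unitary_of_adjoint_eq_neg hX t)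
      (exp_smul_map_map_of_leibniz (adCLM br) (br.leibniz_of_jacobi hanti hjacobi X) t) v w
  have hcovX : adStarOp br (phiExp br X t (x₁ t)) X = phiExp br X t (adStarOp br (x₁ t) X) := by
    simpa only [hΦX] using hcov (x₁ t) X
  have hU : HasDerivAt (fun s => X + phiExp br X s (x₁ s))
      (adOp br X (phiExp br X t (x₁ t)) - phiExp br X t (adStarOp br (x₁ t) X)) t := by
    simpa [phiExp, sub_eq_add_neg] using
      ((hasDerivAt_exp_smul_const' (adOp br X) t).clm_apply (h1 t)).const_add X
  convert hU using 1
  rw [adStarOp_add, add_apply, map_add, map_add, hX, neg_apply, neg_apply, hXX, hcovX, hcov, h2,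
    map_zero]
  abel
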